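/- arXiv:1402.5799 — 2 statements merged into one kernel-verified Lean document; each statement's English description precedes it below -/
import Mathlib

section
/- Let S be a measurable space, N ≥ 2 an integer, and μ a Borel probability measure on S^N invariant under all permutations of the coordinates. Then there exists a probability measure P_μ on the space of probability measures on S (equipped with the σ-algebra generated by the evaluation maps ρ ↦ ρ(A)) such that, setting μ̃ = ∫ ρ^{⊗N} dP_μ(ρ), one has ‖μ^{(n)} − μ̃^{(n)}‖_TV ≤ n(n−1)/N for every 1 ≤ n ≤ N, where μ^{(n)} denotes the pushforward of μ under the projection onto the first n coordinates and ‖·‖_TV is the total variation norm. -/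
open MeasureTheory

noncomputable section

namespace QHE

/-- Total variation norm of the difference of two measures:
`‖μ − ν‖_TV = sup_A (μ(A) − ν(A)) + sup_A (ν(A) − μ(A))`. -/
def tvDist {X : Type*} [MeasurableSpace X] (μ ν : Measure X) : ENNReal :=
  (⨆ (A : Set X) (_ : MeasurableSet A), μ A - ν A) +
    ⨆ (A : Set X) (_ : MeasurableSet A), ν A - μ A

/-- Marginal onto the first `n` coordinates. -/
def marginal {S : Type*} [MeasurableSpace S] {N : ℕ} (μ : Measure (Fin N → S)) (n : ℕ)
    (hnN : n ≤ N) : Measure (Fin n → S) :=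
  Measure.map (fun (z : Fin N → S) (i : Fin n) => z (Fin.castLE hnN i)) μ

/-! ### Auxiliary material for the proof (finite de Finetti, Diaconis–Freedman) -/

open Finset ProbabilityTheory
open scoped ENNReal

section Aux

/-- The key combinatorial estimate: `2 N (N^n - (N)_n) ≤ n (n-1) N^n`. -/
lemma key_nat (N : ℕ) : ∀ n : ℕ, n ≤ N →
    2 * (N ^ n - N.descFactorial n) * N ≤ n * (n - 1) * N ^ n := by
  intro n
  induction n with
  | zero => simp
  | succ n ih =>
    intro hn1
    have hn : n ≤ N := Nat.le_of_succ_le hn1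
    have ih' := ih hn
    have hD : N.descFactorial n ≤ N ^ n := Nat.descFactorial_le_pow N n
    have hrec : N.descFactorial (n + 1) = (N - n) * N.descFactorial n := Nat.descFactorial_succ N n
    have hpow : N ^ (n + 1) = N * N ^ n := by ring
    set a := N ^ n with ha
    set D := N.descFactorial n with hDdef
    have hEB : (N - n) * D + n * D = N * D := by
      rw [← Nat.add_mul, Nat.sub_add_cancel hn]
    have hBA : N * D ≤ N * a := Nat.mul_le_mul_left N hD
    have hmul : N * (a - D) = N * a - N * D := Nat.mul_sub N a D
    have hkey : N ^ (n + 1) - N.descFactorial (n + 1) = N * (a - D) + n * D := by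
      rw [hrec, hpow]
      omega
    rw [hkey]
    have h2 : 2 * (N * (a - D) + n * D) * N = N * (2 * (a - D) * N) + 2 * (n * D) * N := by ring
    rw [h2]
    have hstep1 : N * (2 * (a - D) * N) ≤ N * (n * (n - 1) * a) := Nat.mul_le_mul_left N ih'
    have hstep2 : 2 * (n * D) * N ≤ 2 * (n * a) * N :=
      Nat.mul_le_mul_right N (Nat.mul_le_mul_left 2 (Nat.mul_le_mul_left n hD))
    calc N * (2 * (a - D) * N) + 2 * (n * D) * N
        ≤ N * (n * (n - 1) * a) + 2 * (n * a) * N := Nat.add_le_add hstep1 hstep2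
      _ ≤ (n + 1) * n * (N * a) := by
          cases n with
          | zero => simp
          | succ m =>
            apply le_of_eq
            simp only [Nat.succ_sub_one]
            ring
      _ = (n + 1) * (n + 1 - 1) * N ^ (n + 1) := by rw [Nat.succ_sub_one, hpow]

/-- The number of non-injective maps `Fin n → Fin N`. -/
lemma count_noninj (N n : ℕ) :
    (Finset.univ.filter fun g : Fin n → Fin N => ¬Function.Injective g).card
      = N ^ n - N.descFactorial n := by
  classical
  have h1 : (Finset.univ.filter fun g : Fin n → Fin N => Function.Injective g).card
      = N.descFactorial n := by
    rw [← Fintype.card_subtype]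
    rw [Fintype.card_congr (Equiv.subtypeInjectiveEquivEmbedding (Fin n) (Fin N))]
    simp [Fintype.card_embedding_eq]
  have h2 : (Finset.univ.filter fun g : Fin n → Fin N => ¬Function.Injective g).card
      = Fintype.card (Fin n → Fin N)
        - (Finset.univ.filter fun g : Fin n → Fin N => Function.Injective g).card := by
    rw [Finset.filter_not, Finset.card_sdiff_of_subset (Finset.filter_subset _ _), Finset.card_univ]
  rw [h2, h1, Fintype.card_fun]
  simp

variable {S : Type*} [MeasurableSpace S]

/-- The empirical measure of a tuple. -/
def emp (N : ℕ) (z : Fin N → S) : Measure S :=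
  ((N : ℝ≥0∞))⁻¹ • ∑ j : Fin N, Measure.dirac (z j)

lemma emp_apply (N : ℕ) (z : Fin N → S) (A : Set S) (hA : MeasurableSet A) :
    emp N z A = (N : ℝ≥0∞)⁻¹ * ∑ j : Fin N, A.indicator 1 (z j) := by
  simp [emp, Measure.smul_apply, Measure.finset_sum_apply, Measure.dirac_apply' _ hA,
    smul_eq_mul]

lemma emp_isProb (N : ℕ) (hN : N ≠ 0) (z : Fin N → S) : IsProbabilityMeasure (emp N z) := by
  constructor
  rw [emp_apply N z Set.univ MeasurableSet.univ]
  simp only [Set.indicator_univ, Pi.one_apply, Finset.sum_const, Finset.card_univ,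
    Fintype.card_fin, nsmul_eq_mul, mul_one]
  exact ENNReal.inv_mul_cancel (by exact_mod_cast hN) (ENNReal.natCast_ne_top N)

lemma measurable_emp (N : ℕ) : Measurable (emp N : (Fin N → S) → Measure S) := by
  apply Measure.measurable_of_measurable_coe
  intro A hA
  simp only [emp_apply N _ A hA]
  apply Measurable.const_mul
  apply Finset.measurable_sum
  intro j _
  exact (measurable_one.indicator hA).comp (measurable_pi_apply j)

/-- The product of `m` copies of the empirical measure is the mean of Diracs over all
sampling-with-replacement tuples. -/
lemma pi_emp (N : ℕ) (hN : N ≠ 0) (z : Fin N → S) (m : ℕ) :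
    Measure.pi (fun _ : Fin m => emp N z)
      = ((N : ℝ≥0∞) ^ m)⁻¹ • ∑ g : Fin m → Fin N, Measure.dirac (fun i => z (g i)) := by
  haveI : IsProbabilityMeasure (emp N z) := emp_isProb N hN z
  apply Measure.pi_eq
  intro s hs
  have hps : MeasurableSet (Set.pi Set.univ s) := MeasurableSet.univ_pi hs
  simp only [Measure.smul_apply, Measure.finset_sum_apply, smul_eq_mul]
  have hd : ∀ g : Fin m → Fin N,
      Measure.dirac (fun i => z (g i)) (Set.pi Set.univ s)
        = ∏ i : Fin m, (s i).indicator (1 : S → ℝ≥0∞) (z (g i)) := by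
    intro g
    rw [Measure.dirac_apply' _ hps]
    by_cases h : (fun i => z (g i)) ∈ Set.pi Set.univ s
    · rw [Set.indicator_of_mem h]
      rw [Set.mem_univ_pi] at h
      rw [Finset.prod_congr rfl fun i _ => Set.indicator_of_mem (h i) 1]
      simp
    · rw [Set.indicator_of_notMem h]
      rw [Set.mem_univ_pi] at h
      push_neg at h
      obtain ⟨i, hi⟩ := h
      exact (Finset.prod_eq_zero (Finset.mem_univ i) (by simp [Set.indicator_of_notMem hi])).symm
  rw [Finset.sum_congr rfl fun g _ => hd g, ← Fintype.piFinset_univ]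
  have hswap := Finset.prod_univ_sum (fun _ : Fin m => (univ : Finset (Fin N)))
    (fun i j => (s i).indicator (1 : S → ℝ≥0∞) (z j))
  rw [← hswap]
  rw [Finset.prod_congr rfl fun i _ => emp_apply N z (s i) (hs i), Finset.prod_mul_distrib,
    Finset.prod_const, Finset.card_univ, Fintype.card_fin, ← ENNReal.inv_pow]

lemma measurable_proj {N n : ℕ} (hnN : n ≤ N) :
    Measurable fun (z : Fin N → S) (i : Fin n) => z (Fin.castLE hnN i) :=
  measurable_pi_lambda _ fun _ => measurable_pi_apply _

/-- The marginal of a product of copies of a probability measure is the product of fewer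
copies. -/
lemma map_pi_proj (ρ : Measure S) [IsProbabilityMeasure ρ] {N n : ℕ} (hnN : n ≤ N) :
    Measure.map (fun (z : Fin N → S) (i : Fin n) => z (Fin.castLE hnN i))
        (Measure.pi fun _ : Fin N => ρ)
      = Measure.pi fun _ : Fin n => ρ := by
  symm
  apply Measure.pi_eq
  intro s hs
  classical
  rw [Measure.map_apply (measurable_proj hnN) (MeasurableSet.univ_pi hs)]
  have hpre : (fun (z : Fin N → S) (i : Fin n) => z (Fin.castLE hnN i)) ⁻¹' Set.pi Set.univ s
      = Set.pi Set.univ (fun j : Fin N =>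
          if h : (j : ℕ) < n then s ⟨(j : ℕ), h⟩ else Set.univ) := by
    ext z
    simp only [Set.mem_preimage, Set.mem_univ_pi]
    constructor
    · intro h j
      by_cases hj : (j : ℕ) < n
      · have := h ⟨(j : ℕ), hj⟩
        simpa [hj, Fin.castLE] using this
      · simp [hj]
    · intro h i
      have := h (Fin.castLE hnN i)
      simpa [i.isLt, Fin.castLE] using this
  rw [hpre, Measure.pi_pi]
  rw [← Finset.prod_filter_mul_prod_filter_not Finset.univ (fun j : Fin N => (j : ℕ) < n)]
  have h2 : ∏ j ∈ Finset.univ.filter (fun j : Fin N => ¬ (j : ℕ) < n),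
      ρ (if h : (j : ℕ) < n then s ⟨(j : ℕ), h⟩ else Set.univ) = 1 := by
    apply Finset.prod_eq_one
    intro j hj
    rw [Finset.mem_filter] at hj
    rw [dif_neg hj.2, measure_univ]
  rw [h2, mul_one]
  have hset : Finset.univ.filter (fun j : Fin N => (j : ℕ) < n)
      = Finset.univ.map (Fin.castLEEmb hnN) := by
    ext j
    simp only [Finset.mem_filter, Finset.mem_univ, true_and, Finset.mem_map]
    constructor
    · intro hj
      exact ⟨⟨(j : ℕ), hj⟩, by ext; simp [Fin.castLEEmb, Fin.castLE]⟩
    · rintro ⟨i, rfl⟩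
      simpa [Fin.castLEEmb, Fin.castLE] using i.isLt
  rw [hset, Finset.prod_map]
  apply Finset.prod_congr rfl
  intro i _
  have hlt : ((Fin.castLEEmb hnN i : Fin N) : ℕ) < n := by
    simpa [Fin.castLEEmb, Fin.castLE] using i.isLt
  rw [dif_pos hlt]
  congr 1

/-- Markov kernel sending a probability measure to itself (junk elsewhere). -/
def idKer (x₀ : S) : Kernel (Measure S) S where
  toFun := fun ρ => if ρ Set.univ = 1 then ρ else Measure.dirac x₀
  measurable' := by
    apply Measurable.ite
    · exact (Measure.measurable_coe MeasurableSet.univ) (measurableSet_singleton 1)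
    · exact measurable_id
    · exact measurable_const

instance idKer_markov (x₀ : S) : IsMarkovKernel (idKer x₀) := by
  constructor
  intro ρ
  show IsProbabilityMeasure (if ρ Set.univ = 1 then ρ else Measure.dirac x₀)
  split_ifs with h
  · exact ⟨h⟩
  · infer_instance

lemma idKer_apply (x₀ : S) (ρ : Measure S) (h : IsProbabilityMeasure ρ) : idKer x₀ ρ = ρ := by
  show (if ρ Set.univ = 1 then ρ else Measure.dirac x₀) = ρ
  rw [if_pos h.measure_univ]

lemma measurable_finCons {m : ℕ} :
    Measurable (fun p : S × (Fin m → S) => Fin.cons p.1 p.2 :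
      S × (Fin m → S) → (Fin (m+1) → S)) := by
  apply measurable_pi_lambda
  intro j
  refine Fin.cases ?_ ?_ j
  · simpa using measurable_fst
  · intro i
    simp only [Fin.cons_succ]
    exact (measurable_pi_apply i).comp measurable_snd

/-- A measurable assignment `ρ ↦ ρ^{⊗ m}`, valid on probability measures. -/
def piKer (x₀ : S) : (m : ℕ) → Kernel (Measure S) (Fin m → S)
  | 0 => Kernel.const _ (Measure.dirac (fun i => i.elim0))
  | (m+1) => Kernel.map ((idKer x₀) ×ₖ (piKer x₀ m)) (fun p => Fin.cons p.1 p.2)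

instance piKer_markov (x₀ : S) : ∀ m, IsMarkovKernel (piKer x₀ m)
  | 0 => by rw [piKer]; infer_instance
  | (m+1) => by
      rw [piKer]
      haveI := piKer_markov x₀ m
      exact Kernel.IsMarkovKernel.map _ measurable_finCons

lemma piKer_apply (x₀ : S) (m : ℕ) (ρ : Measure S) (h : IsProbabilityMeasure ρ) :
    piKer x₀ m ρ = Measure.pi (fun _ : Fin m => ρ) := by
  induction m with
  | zero =>
    rw [piKer, Measure.pi_of_empty]
    rw [Kernel.const_apply]
    exact congrArg Measure.dirac (funext fun i => i.elim0)
  | succ m ih =>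
    haveI := piKer_markov x₀ m
    rw [piKer, Kernel.map_apply _ measurable_finCons, Kernel.prod_apply, idKer_apply x₀ ρ h, ih]
    symm
    apply Measure.pi_eq
    intro s hs
    rw [Measure.map_apply measurable_finCons (MeasurableSet.univ_pi hs)]
    have hpre : (fun p : S × (Fin m → S) => (Fin.cons p.1 p.2 : Fin (m+1) → S)) ⁻¹'
          Set.pi Set.univ s
        = (s 0) ×ˢ Set.pi Set.univ (fun i : Fin m => s i.succ) := by
      ext ⟨x, v⟩
      simp only [Set.mem_preimage, Set.mem_univ_pi, Set.mem_prod, Fin.forall_fin_succ,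
        Fin.cons_zero, Fin.cons_succ]
    rw [hpre, Measure.prod_prod, Measure.pi_pi, Fin.prod_univ_succ]

lemma measurable_comp_perm {N : ℕ} (σ : Equiv.Perm (Fin N)) :
    Measurable (fun z : Fin N → S => z ∘ σ) :=
  measurable_pi_lambda _ fun i => measurable_pi_apply (σ i)

/-- Symmetry: projecting onto any `n` distinct coordinates gives the `n`-th marginal. -/
lemma map_inj_eq_marginal {N : ℕ} (μ : Measure (Fin N → S))
    (hsym : ∀ σ : Equiv.Perm (Fin N), Measure.map (fun z => z ∘ σ) μ = μ)
    {n : ℕ} (hnN : n ≤ N) (g : Fin n → Fin N) (hg : Function.Injective g) :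
    Measure.map (fun (z : Fin N → S) (i : Fin n) => z (g i)) μ = marginal μ n hnN := by
  classical
  set f₀ : Fin n → Fin N := Fin.castLE hnN with hf₀def
  have hf₀ : Function.Injective f₀ := Fin.castLE_injective hnN
  set e : {x // x ∈ Set.range f₀} ≃ {x // x ∈ Set.range g} :=
    (Equiv.ofInjective f₀ hf₀).symm.trans (Equiv.ofInjective g hg) with he
  set σ : Equiv.Perm (Fin N) := e.extendSubtype with hσdef
  have hσ : ∀ i : Fin n, σ (f₀ i) = g i := by
    intro i
    have h1 : σ (f₀ i) = e ⟨f₀ i, ⟨i, rfl⟩⟩ :=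
      Equiv.extendSubtype_apply_of_mem e (f₀ i) ⟨i, rfl⟩
    rw [h1, he]
    simp [Equiv.ofInjective_symm_apply, Equiv.ofInjective_apply]
  have hcomp : (fun (z : Fin N → S) (i : Fin n) => z (g i))
      = (fun (w : Fin N → S) (i : Fin n) => w (f₀ i)) ∘ (fun z : Fin N → S => z ∘ σ) := by
    funext z
    funext i
    simp [Function.comp, hσ i]
  rw [hcomp, ← Measure.map_map (measurable_pi_lambda _ fun i => measurable_pi_apply _)
    (measurable_comp_perm σ), hsym σ]
  rfl

lemma indicator_preimage_apply {X Y : Type*} (φ : X → Y) (A : Set Y) (z : X) :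
    A.indicator (1 : Y → ℝ≥0∞) (φ z) = (φ ⁻¹' A).indicator (1 : X → ℝ≥0∞) z := by
  by_cases h : φ z ∈ A
  · simp [Set.indicator_apply, Set.mem_preimage, h]
  · simp [Set.indicator_apply, Set.mem_preimage, h]

end Aux

theorem statement_11 {S : Type*} [MeasurableSpace S] (N : ℕ) (hN : 2 ≤ N)
    (μ : Measure (Fin N → S)) (hμ : IsProbabilityMeasure μ)
    (hsym : ∀ σ : Equiv.Perm (Fin N), Measure.map (fun z => z ∘ σ) μ = μ) :
    ∃ P : Measure (Measure S), IsProbabilityMeasure P ∧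
      P {ρ : Measure S | IsProbabilityMeasure ρ} = 1 ∧
      ∀ (n : ℕ) (hn : 1 ≤ n) (hnN : n ≤ N),
        tvDist (marginal μ n hnN)
            (marginal (P.bind fun ρ => Measure.pi fun _ : Fin N => ρ) n hnN) ≤
          ENNReal.ofReal ((n : ℝ) * ((n : ℝ) - 1) / N) := by
  classical
  have hN0 : N ≠ 0 := by omega
  have hS : Nonempty S := by
    by_contra hc
    rw [not_nonempty_iff] at hc
    have h0 : (Set.univ : Set (Fin N → S)) = ∅ := by
      rw [Set.univ_eq_empty_iff]
      refine ⟨fun z => ?_⟩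
      exact hc.elim (z ⟨0, by omega⟩)
    have h1 := hμ.measure_univ
    rw [h0, measure_empty] at h1
    exact zero_ne_one h1
  obtain ⟨x₀⟩ := hS
  set P : Measure (Measure S) := Measure.map (emp N) μ with hPdef
  have hUeq : {ρ : Measure S | IsProbabilityMeasure ρ}
      = (fun ρ : Measure S => ρ Set.univ) ⁻¹' {1} := by
    ext ρ
    constructor
    · intro h
      exact h.measure_univ
    · intro h
      exact ⟨h⟩
  have hU : MeasurableSet {ρ : Measure S | IsProbabilityMeasure ρ} := by
    rw [hUeq]
    exact (Measure.measurable_coe MeasurableSet.univ) (measurableSet_singleton 1)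
  haveI hPprob : IsProbabilityMeasure P := Measure.isProbabilityMeasure_map (measurable_emp N).aemeasurable
  have hPU : P {ρ : Measure S | IsProbabilityMeasure ρ} = 1 := by
    rw [hPdef, Measure.map_apply (measurable_emp N) hU]
    have hpre : (emp N) ⁻¹' {ρ : Measure S | IsProbabilityMeasure ρ} = Set.univ := by
      ext z
      simp only [Set.mem_preimage, Set.mem_setOf_eq, Set.mem_univ, iff_true]
      exact emp_isProb N hN0 z
    rw [hpre]
    exact hμ.measure_univ
  refine ⟨P, hPprob, hPU, ?_⟩
  intro n hn hnN
  -- replace the integrand of the bind with a measurable kernel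
  have hae : ∀ᵐ ρ ∂P, IsProbabilityMeasure ρ := by
    rw [ae_iff]
    have hcs : {ρ : Measure S | ¬ IsProbabilityMeasure ρ}
        = {ρ : Measure S | IsProbabilityMeasure ρ}ᶜ := rfl
    rw [hcs, measure_compl hU (measure_ne_top P _), hPU, measure_univ, tsub_self]
  have hbind : P.bind (fun ρ => Measure.pi fun _ : Fin N => ρ)
      = P.bind (fun ρ => piKer x₀ N ρ) := by
    unfold Measure.bind
    congr 1
    apply Measure.map_congr
    filter_upwards [hae] with ρ hρ
    exact (piKer_apply x₀ N ρ hρ).symm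
  set c : ℝ≥0∞ := ((N : ℝ≥0∞) ^ n)⁻¹ with hc
  have hNn0 : ((N : ℝ≥0∞) ^ n) ≠ 0 := pow_ne_zero n (Nat.cast_ne_zero.mpr hN0)
  have hNnt : ((N : ℝ≥0∞) ^ n) ≠ ⊤ := ENNReal.pow_ne_top (ENNReal.natCast_ne_top N)
  -- value of the marginal of the mixture
  have hval : ∀ A : Set (Fin n → S), MeasurableSet A →
      marginal (P.bind fun ρ => Measure.pi fun _ : Fin N => ρ) n hnN A
        = c * ∑ g : Fin n → Fin N, μ ((fun (z : Fin N → S) (i : Fin n) => z (g i)) ⁻¹' A) := by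
    intro A hA
    rw [hbind, marginal, Measure.map_apply (measurable_proj hnN) hA]
    have hB : MeasurableSet ((fun (z : Fin N → S) (i : Fin n) => z (Fin.castLE hnN i)) ⁻¹' A) :=
      (measurable_proj hnN) hA
    rw [Measure.bind_apply hB (piKer x₀ N).measurable.aemeasurable]
    rw [hPdef, lintegral_map (Kernel.measurable_coe _ hB) (measurable_emp N)]
    have hpt : ∀ z : Fin N → S,
        piKer x₀ N (emp N z) ((fun (w : Fin N → S) (i : Fin n) => w (Fin.castLE hnN i)) ⁻¹' A)
          = c * ∑ g : Fin n → Fin N, A.indicator 1 (fun i => z (g i)) := by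
      intro z
      haveI := emp_isProb N hN0 z
      rw [piKer_apply x₀ N _ (emp_isProb N hN0 z)]
      rw [← Measure.map_apply (measurable_proj hnN) hA, map_pi_proj (emp N z) hnN]
      rw [pi_emp N hN0 z n, Measure.smul_apply, Measure.finset_sum_apply, smul_eq_mul]
      congr 1
      exact Finset.sum_congr rfl fun g _ => Measure.dirac_apply' _ hA
    rw [lintegral_congr hpt]
    have hφ : ∀ g : Fin n → Fin N,
        Measurable (fun (z : Fin N → S) => (fun i : Fin n => z (g i))) := fun g =>
      measurable_pi_lambda _ fun _ => measurable_pi_apply _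
    have hmeas : ∀ g : Fin n → Fin N,
        Measurable (fun z : Fin N → S => A.indicator (1 : (Fin n → S) → ℝ≥0∞)
          (fun i => z (g i))) := fun g => (measurable_one.indicator hA).comp (hφ g)
    rw [lintegral_const_mul c (Finset.measurable_sum _ fun g _ => hmeas g)]
    congr 1
    rw [lintegral_finset_sum _ fun g _ => hmeas g]
    apply Finset.sum_congr rfl
    intro g _
    have hind : ∀ z : Fin N → S,
        A.indicator (1 : (Fin n → S) → ℝ≥0∞) (fun i => z (g i))
          = ((fun (z : Fin N → S) (i : Fin n) => z (g i)) ⁻¹' A).indicator 1 z := fun z =>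
      indicator_preimage_apply (fun (z : Fin N → S) (i : Fin n) => z (g i)) A z
    rw [lintegral_congr hind, lintegral_indicator_one ((hφ g) hA)]
  -- symmetry: injective tuples give the marginal
  have hmarg : ∀ (g : Fin n → Fin N), Function.Injective g → ∀ A : Set (Fin n → S),
      MeasurableSet A →
      μ ((fun (z : Fin N → S) (i : Fin n) => z (g i)) ⁻¹' A) = marginal μ n hnN A := by
    intro g hg A hA
    rw [← Measure.map_apply (measurable_pi_lambda _ fun _ => measurable_pi_apply _) hA,
      map_inj_eq_marginal μ hsym hnN g hg]
  haveI hmargprob : IsProbabilityMeasure (marginal μ n hnN) :=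
    Measure.isProbabilityMeasure_map (measurable_proj hnN).aemeasurable
  set K : ℕ := (Finset.univ.filter fun g : Fin n → Fin N => ¬ Function.Injective g).card with hK
  -- the two one-sided bounds
  have hcard : (Finset.univ : Finset (Fin n → Fin N)).card = N ^ n := by
    rw [Finset.card_univ, Fintype.card_fun]
    simp
  have hbound : ∀ A : Set (Fin n → S), MeasurableSet A →
      (marginal μ n hnN A
          - marginal (P.bind fun ρ => Measure.pi fun _ : Fin N => ρ) n hnN A ≤ c * K)
      ∧ (marginal (P.bind fun ρ => Measure.pi fun _ : Fin N => ρ) n hnN A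
          - marginal μ n hnN A ≤ c * K) := by
    intro A hA
    set a₀ : ℝ≥0∞ := marginal μ n hnN A with ha₀def
    set F : (Fin n → Fin N) → ℝ≥0∞ :=
      fun g => μ ((fun (z : Fin N → S) (i : Fin n) => z (g i)) ⁻¹' A) with hF
    have ha₀le : a₀ ≤ 1 := prob_le_one
    have hFle : ∀ g, F g ≤ 1 := fun g => prob_le_one
    have ha₀ : a₀ = c * ∑ _g : Fin n → Fin N, a₀ := by
      rw [Finset.sum_const, hcard, nsmul_eq_mul, ← mul_assoc, Nat.cast_pow, hc,
        ENNReal.inv_mul_cancel hNn0 hNnt, one_mul]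
    have hKsum : (K : ℝ≥0∞)
        = ∑ _g ∈ Finset.univ.filter (fun g : Fin n → Fin N => ¬ Function.Injective g),
            (1 : ℝ≥0∞) := by
      rw [Finset.sum_const, nsmul_eq_mul, mul_one, hK]
    have hinj : ∀ g ∈ Finset.univ.filter (fun g : Fin n → Fin N => Function.Injective g),
        F g = a₀ := by
      intro g hg
      exact hmarg g (Finset.mem_filter.mp hg).2 A hA
    have hsplit : ∀ G : (Fin n → Fin N) → ℝ≥0∞,
        ∑ g : Fin n → Fin N, G g
          = ∑ g ∈ Finset.univ.filter (fun g : Fin n → Fin N => Function.Injective g), G g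
            + ∑ g ∈ Finset.univ.filter (fun g : Fin n → Fin N => ¬ Function.Injective g), G g :=
      fun G => (Finset.sum_filter_add_sum_filter_not _ _ _).symm
    constructor
    · rw [hval A hA, tsub_le_iff_right]
      have hsum : ∑ _g : Fin n → Fin N, a₀ ≤ (K : ℝ≥0∞) + ∑ g : Fin n → Fin N, F g := by
        rw [hsplit (fun _ => a₀), hsplit F]
        have h1 : ∑ g ∈ Finset.univ.filter (fun g : Fin n → Fin N => Function.Injective g),
            a₀ = ∑ g ∈ Finset.univ.filter (fun g : Fin n → Fin N => Function.Injective g),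
              F g := Finset.sum_congr rfl fun g hg => (hinj g hg).symm
        have h2 : ∑ _g ∈ Finset.univ.filter (fun g : Fin n → Fin N => ¬ Function.Injective g),
            a₀ ≤ (K : ℝ≥0∞) := by
          rw [hKsum]
          exact Finset.sum_le_sum fun g _ => ha₀le
        calc (∑ g ∈ Finset.univ.filter (fun g : Fin n → Fin N => Function.Injective g), a₀)
              + ∑ g ∈ Finset.univ.filter (fun g : Fin n → Fin N => ¬ Function.Injective g), a₀
            ≤ (∑ g ∈ Finset.univ.filter (fun g : Fin n → Fin N => Function.Injective g), F g)
              + (K : ℝ≥0∞) := by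
              rw [h1]
              exact add_le_add le_rfl h2
          _ ≤ (K : ℝ≥0∞)
              + ((∑ g ∈ Finset.univ.filter
                    (fun g : Fin n → Fin N => Function.Injective g), F g)
                + ∑ g ∈ Finset.univ.filter
                    (fun g : Fin n → Fin N => ¬ Function.Injective g), F g) := by
              rw [add_comm]
              exact add_le_add le_rfl le_self_add
      calc a₀ = c * ∑ _g : Fin n → Fin N, a₀ := ha₀
        _ ≤ c * ((K : ℝ≥0∞) + ∑ g : Fin n → Fin N, F g) := mul_le_mul_right hsum c
        _ = c * K + c * ∑ g : Fin n → Fin N, F g := mul_add c _ _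
    · rw [hval A hA, tsub_le_iff_right]
      have hsum : ∑ g : Fin n → Fin N, F g ≤ (K : ℝ≥0∞) + ∑ _g : Fin n → Fin N, a₀ := by
        rw [hsplit (fun _ => a₀), hsplit F]
        have h1 : ∑ g ∈ Finset.univ.filter (fun g : Fin n → Fin N => Function.Injective g),
            F g = ∑ g ∈ Finset.univ.filter (fun g : Fin n → Fin N => Function.Injective g),
              a₀ := Finset.sum_congr rfl hinj
        have h2 : ∑ g ∈ Finset.univ.filter (fun g : Fin n → Fin N => ¬ Function.Injective g),
            F g ≤ (K : ℝ≥0∞) := by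
          rw [hKsum]
          exact Finset.sum_le_sum fun g _ => hFle g
        calc (∑ g ∈ Finset.univ.filter (fun g : Fin n → Fin N => Function.Injective g), F g)
              + ∑ g ∈ Finset.univ.filter (fun g : Fin n → Fin N => ¬ Function.Injective g), F g
            ≤ (∑ g ∈ Finset.univ.filter (fun g : Fin n → Fin N => Function.Injective g), a₀)
              + (K : ℝ≥0∞) := by
              rw [h1]
              exact add_le_add le_rfl h2
          _ ≤ (K : ℝ≥0∞)
              + ((∑ g ∈ Finset.univ.filter
                    (fun g : Fin n → Fin N => Function.Injective g), a₀)
                + ∑ g ∈ Finset.univ.filter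
                    (fun g : Fin n → Fin N => ¬ Function.Injective g), a₀) := by
              rw [add_comm]
              exact add_le_add le_rfl le_self_add
      calc c * ∑ g : Fin n → Fin N, F g
          ≤ c * ((K : ℝ≥0∞) + ∑ _g : Fin n → Fin N, a₀) := mul_le_mul_right hsum c
        _ = c * K + c * ∑ _g : Fin n → Fin N, a₀ := mul_add c _ _
        _ = c * K + a₀ := by rw [← ha₀]
  -- put the two bounds together
  have htv : tvDist (marginal μ n hnN)
      (marginal (P.bind fun ρ => Measure.pi fun _ : Fin N => ρ) n hnN) ≤ c * K + c * K := by
    apply add_le_add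
    · exact iSup₂_le fun A hA => (hbound A hA).1
    · exact iSup₂_le fun A hA => (hbound A hA).2
  refine htv.trans ?_
  -- final arithmetic
  have hKval : K = N ^ n - N.descFactorial n := count_noninj N n
  have hnat : 2 * K ≤ n * (n - 1) * N ^ (n - 1) := by
    have h := key_nat N n hnN
    rw [← hKval] at h
    have hsp : N ^ n = N ^ (n - 1) * N := by
      rw [← pow_succ]
      congr 1
      omega
    rw [hsp] at h
    have h' : 2 * K * N ≤ n * (n - 1) * N ^ (n - 1) * N := by
      calc 2 * K * N ≤ n * (n - 1) * (N ^ (n - 1) * N) := h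
        _ = n * (n - 1) * N ^ (n - 1) * N := by ring
    exact Nat.le_of_mul_le_mul_right h' (Nat.pos_of_ne_zero hN0)
  have hNne0 : (N : ℝ≥0∞) ≠ 0 := Nat.cast_ne_zero.mpr hN0
  have hNnet : (N : ℝ≥0∞) ≠ ⊤ := ENNReal.natCast_ne_top N
  have hRHS : ENNReal.ofReal ((n : ℝ) * ((n : ℝ) - 1) / N)
      = ((n * (n - 1) : ℕ) : ℝ≥0∞) / (N : ℝ≥0∞) := by
    have h1 : (n : ℝ) * ((n : ℝ) - 1) = ((n * (n - 1) : ℕ) : ℝ) := by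
      push_cast [Nat.cast_sub hn]
      ring
    rw [h1, ENNReal.ofReal_div_of_pos (by positivity), ENNReal.ofReal_natCast,
      ENNReal.ofReal_natCast]
  rw [hRHS]
  calc c * K + c * K = (2 * (K : ℝ≥0∞)) / ((N : ℝ≥0∞) ^ n) := by
        rw [hc, two_mul, div_eq_mul_inv, add_mul, mul_comm]
    _ ≤ ((n * (n - 1) : ℕ) : ℝ≥0∞) / (N : ℝ≥0∞) := by
        rw [ENNReal.div_le_iff hNn0 hNnt]
        have hsp : (N : ℝ≥0∞) ^ n = (N : ℝ≥0∞) ^ (n - 1) * N := by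
          rw [← pow_succ]
          congr 1
          omega
        have hmulc : ((n * (n - 1) : ℕ) : ℝ≥0∞) / (N : ℝ≥0∞)
            * ((N : ℝ≥0∞) ^ (n - 1) * N)
            = ((n * (n - 1) : ℕ) : ℝ≥0∞) * (N : ℝ≥0∞) ^ (n - 1) := by
          rw [div_eq_mul_inv]
          calc ((n * (n - 1) : ℕ) : ℝ≥0∞) * (N : ℝ≥0∞)⁻¹ * ((N : ℝ≥0∞) ^ (n - 1) * N)
              = ((n * (n - 1) : ℕ) : ℝ≥0∞) * (N : ℝ≥0∞) ^ (n - 1)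
                * ((N : ℝ≥0∞)⁻¹ * N) := by ring
            _ = ((n * (n - 1) : ℕ) : ℝ≥0∞) * (N : ℝ≥0∞) ^ (n - 1) := by
                rw [ENNReal.inv_mul_cancel hNne0 hNnet, mul_one]
        rw [hsp, hmulc]
        calc (2 * (K : ℝ≥0∞)) = ((2 * K : ℕ) : ℝ≥0∞) := by push_cast; ring
          _ ≤ ((n * (n - 1) * N ^ (n - 1) : ℕ) : ℝ≥0∞) := Nat.cast_le.mpr hnat
          _ = ((n * (n - 1) : ℕ) : ℝ≥0∞) * (N : ℝ≥0∞) ^ (n - 1) := by push_cast; ring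

end QHE
end
end

section
/- For every integer D ≥ 1 there exists a constant C_D > 0 such that for every monic polynomial p of degree D with complex coefficients and every α > 0, the two-dimensional Lebesgue measure of the set {z ∈ ℂ : |p(z)| ≤ α} is at most C_D · α^{2/D}. Moreover, this set can be covered by at most C_D · max(1, α^{2/D − 2}) discs of radius α. -/
open MeasureTheory

noncomputable section

namespace QHE

open Metric


lemma cover_ball {r α : ℝ} (hα : 0 < α) (hr : 0 ≤ r) :
    ∃ m : ℕ, (m : ℝ) ≤ 2 * (r / α) + 5 ∧ ∀ c : ℂ, ∃ g : Fin m × Fin m → ℂ,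
      closedBall c r ⊆ ⋃ p, closedBall (g p) α := by
  set M : ℕ := ⌈r / α⌉₊ with hM
  refine ⟨2 * M + 3, ?_, ?_⟩
  · have h1 : (M : ℝ) < r / α + 1 := Nat.ceil_lt_add_one (by positivity)
    push_cast
    nlinarith
  intro c
  refine ⟨fun p => c + Complex.ofReal (((p.1 : ℝ) - ((M : ℝ) + 1)) * α) +
      Complex.ofReal (((p.2 : ℝ) - ((M : ℝ) + 1)) * α) * Complex.I, ?_⟩
  intro z hz
  simp only [mem_closedBall, Complex.dist_eq] at hz
  set x := (z - c).re with hx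
  set y := (z - c).im with hy
  have hxr : |x| ≤ r := le_trans (Complex.abs_re_le_norm _) hz
  have hyr : |y| ≤ r := le_trans (Complex.abs_im_le_norm _) hz
  have hrα : r / α ≤ (M : ℝ) := Nat.le_ceil _
  set a : ℤ := round (x / α) with ha
  set b : ℤ := round (y / α) with hb
  have hround : ∀ t : ℝ, |t| ≤ r → |t - round (t / α) * α| ≤ α / 2 ∧ |round (t / α)| ≤ (M : ℤ) + 1 := by
    intro t ht
    have h := abs_sub_round (t / α)
    constructor
    · have h2 : t - round (t / α) * α = (t / α - round (t / α)) * α := by field_simp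
      rw [h2, abs_mul, abs_of_pos hα]
      nlinarith [abs_nonneg (t / α - (round (t / α) : ℝ))]
    · have htα : |t / α| ≤ (M : ℝ) := by
        rw [abs_div, abs_of_pos hα]
        exact le_trans (by gcongr) hrα
      have h3 : (|round (t / α)| : ℝ) ≤ M + 1 := by
        have := abs_sub_abs_le_abs_sub ((round (t / α) : ℝ)) (t / α)
        have := abs_sub_comm ((round (t / α) : ℝ)) (t / α)
        linarith
      exact_mod_cast h3
  obtain ⟨hax, haM⟩ := hround x hxr
  obtain ⟨hby, hbM⟩ := hround y hyr
  rw [abs_le] at haM hbM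
  have haj : 0 ≤ a + (M + 1) ∧ (a + (M + 1)).toNat < 2 * M + 3 := by omega
  have hbj : 0 ≤ b + (M + 1) ∧ (b + (M + 1)).toNat < 2 * M + 3 := by omega
  refine Set.mem_iUnion.mpr ⟨⟨⟨(a + (M + 1)).toNat, haj.2⟩, ⟨(b + (M + 1)).toNat, hbj.2⟩⟩, ?_⟩
  simp only [mem_closedBall, Complex.dist_eq]
  have hcj : (((a + ((M : ℤ) + 1)).toNat : ℕ) : ℝ) = (a : ℝ) + ((M : ℝ) + 1) := by
    have h := Int.toNat_of_nonneg haj.1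
    exact_mod_cast congrArg (fun n : ℤ => (n : ℝ)) h
  have hck : (((b + ((M : ℤ) + 1)).toNat : ℕ) : ℝ) = (b : ℝ) + ((M : ℝ) + 1) := by
    have h := Int.toNat_of_nonneg hbj.1
    exact_mod_cast congrArg (fun n : ℤ => (n : ℝ)) h
  refine le_trans (Complex.norm_le_abs_re_add_abs_im _) ?_
  simp only [Complex.sub_re, Complex.sub_im, Complex.add_re, Complex.add_im,
    Complex.mul_re, Complex.mul_im, Complex.I_re, Complex.I_im,
    Complex.ofReal_re, Complex.ofReal_im, mul_zero, mul_one, zero_sub, sub_zero,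
    add_zero, zero_add, zero_mul]
  rw [hcj, hck]
  have e1 : z.re - (c.re + ((a : ℝ) + ((M : ℝ) + 1) - ((M : ℝ) + 1)) * α) = x - (a : ℝ) * α := by
    rw [hx]; simp [Complex.sub_re]; ring
  have e2 : z.im - (c.im + ((b : ℝ) + ((M : ℝ) + 1) - ((M : ℝ) + 1)) * α) = y - (b : ℝ) * α := by
    rw [hy]; simp [Complex.sub_im]; ring
  rw [e1, e2]
  linarith


theorem statement_16 (D : ℕ) (hD : 1 ≤ D) :
    ∃ C : ℝ, 0 < C ∧
      ∀ (c : Fin D → ℂ) (α : ℝ), 0 < α →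
        volume {z : ℂ | ‖∏ i, (z - c i)‖ ≤ α} ≤
            ENNReal.ofReal (C * α ^ (2 / (D : ℝ))) ∧
          ∃ (n : ℕ) (centers : Fin n → ℂ),
            (n : ℝ) ≤ C * max 1 (α ^ (2 / (D : ℝ) - 2)) ∧
              {z : ℂ | ‖∏ i, (z - c i)‖ ≤ α} ⊆
                ⋃ i : Fin n, Metric.closedBall (centers i) α := by
  have hD0 : (D : ℝ) ≠ 0 := by positivity
  have hD1 : (1:ℝ) ≤ (D:ℝ) := by exact_mod_cast hD
  refine ⟨200 * D, by positivity, fun c α hα => ?_⟩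
  set r : ℝ := α ^ (1 / (D : ℝ)) with hr
  have hrpos : 0 < r := Real.rpow_pos_of_pos hα _
  have hrD : r ^ D = α := by
    rw [hr, ← Real.rpow_natCast (α ^ (1 / (D:ℝ))) D, ← Real.rpow_mul hα.le]
    rw [one_div_mul_cancel hD0, Real.rpow_one]
  have hr2 : r ^ 2 = α ^ (2 / (D : ℝ)) := by
    rw [hr, ← Real.rpow_natCast (α ^ (1 / (D:ℝ))) 2, ← Real.rpow_mul hα.le]
    norm_num
    rw [mul_comm]
    rfl
  have hsub : {z : ℂ | ‖∏ i, (z - c i)‖ ≤ α} ⊆ ⋃ i : Fin D, closedBall (c i) r := by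
    intro z hz
    simp only [Set.mem_setOf_eq] at hz
    by_contra hcon
    simp only [Set.mem_iUnion, mem_closedBall, Complex.dist_eq, not_exists, not_le] at hcon
    have hlt : (∏ _i : Fin D, r) < ∏ i, ‖z - c i‖ := by
      apply Finset.prod_lt_prod_of_nonempty (fun i _ => hrpos) (fun i _ => hcon i)
      exact Finset.univ_nonempty_iff.mpr (Fin.pos_iff_nonempty.mp (by omega))
    rw [Finset.prod_const, Finset.card_univ, Fintype.card_fin, hrD] at hlt
    rw [norm_prod] at hz
    linarith
  constructor
  · calc volume {z : ℂ | ‖∏ i, (z - c i)‖ ≤ α}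
        ≤ volume (⋃ i : Fin D, closedBall (c i) r) := measure_mono hsub
      _ ≤ ∑ i : Fin D, volume (closedBall (c i) r) := measure_iUnion_fintype_le _ _
      _ = D * (ENNReal.ofReal r ^ 2 * NNReal.pi) := by
          simp [Complex.volume_closedBall, Finset.sum_const]
      _ ≤ ENNReal.ofReal (200 * D * α ^ (2 / (D : ℝ))) := by
          have hpi : (NNReal.pi : ENNReal) ≤ ENNReal.ofReal 4 := by
            rw [← ENNReal.ofReal_coe_nnreal]
            exact ENNReal.ofReal_le_ofReal (by rw [NNReal.coe_real_pi]; exact Real.pi_le_four)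
          calc (D : ENNReal) * (ENNReal.ofReal r ^ 2 * NNReal.pi)
              ≤ (D : ENNReal) * (ENNReal.ofReal r ^ 2 * ENNReal.ofReal 4) := by gcongr
            _ = ENNReal.ofReal ((D : ℝ) * (r ^ 2 * 4)) := by
                rw [← ENNReal.ofReal_pow hrpos.le, ← ENNReal.ofReal_mul (by positivity),
                  ← ENNReal.ofReal_natCast, ← ENNReal.ofReal_mul (by positivity)]
            _ ≤ ENNReal.ofReal (200 * D * α ^ (2 / (D : ℝ))) := by
                apply ENNReal.ofReal_le_ofReal
                rw [hr2]
                have : (0:ℝ) ≤ α ^ (2 / (D : ℝ)) := by positivity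
                nlinarith [hD1]
  · rcases le_or_gt 1 α with hα1 | hα1
    · -- α ≥ 1 : use the D balls of radius r ≤ α
      refine ⟨D, c, ?_, ?_⟩
      · calc (D : ℝ) ≤ 200 * D * 1 := by nlinarith [hD1]
          _ ≤ 200 * D * max 1 (α ^ (2 / (D : ℝ) - 2)) := by
              apply mul_le_mul_of_nonneg_left (le_max_left _ _) (by positivity)
      · refine hsub.trans (Set.iUnion_mono fun i => closedBall_subset_closedBall ?_)
        calc r = α ^ (1 / (D : ℝ)) := rfl
          _ ≤ α ^ (1 : ℝ) := by
              apply Real.rpow_le_rpow_of_exponent_le hα1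
              rw [div_le_one (by positivity)]
              exact_mod_cast hD1
          _ = α := Real.rpow_one α
    · -- α < 1 : grid covering
      have hra : α ≤ r := by
        calc α = α ^ (1 : ℝ) := (Real.rpow_one α).symm
          _ ≤ α ^ (1 / (D : ℝ)) := by
              apply Real.rpow_le_rpow_of_exponent_ge hα hα1.le
              rw [div_le_one (by positivity)]
              exact_mod_cast hD1
      have ht1 : 1 ≤ r / α := (one_le_div hα).mpr hra
      obtain ⟨m, hm, hg⟩ := cover_ball hα hrpos.le
      choose g hgs using hg
      have ecard : Fintype.card (Fin D × Fin m × Fin m) = D * (m * m) := by simp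
      let e := Fintype.equivFinOfCardEq ecard
      refine ⟨D * (m * m), fun i => g (c (e.symm i).1) ((e.symm i).2), ?_, ?_⟩
      · have hm7 : (m : ℝ) ≤ 7 * (r / α) := by linarith
        have hm0 : (0:ℝ) ≤ m := Nat.cast_nonneg m
        have hrα2 : (r / α) ^ 2 = α ^ (2 / (D : ℝ) - 2) := by
          rw [div_pow, hr2, Real.rpow_sub hα]
          congr 1
          rw [show ((2:ℝ)) = ((2:ℕ):ℝ) by norm_num, Real.rpow_natCast]
        have hmax : α ^ (2 / (D : ℝ) - 2) ≤ max 1 (α ^ (2 / (D : ℝ) - 2)) := le_max_right _ _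
        push_cast
        calc (D : ℝ) * ((m : ℝ) * m) ≤ (D : ℝ) * (49 * (r / α) ^ 2) := by
              apply mul_le_mul_of_nonneg_left _ (Nat.cast_nonneg D)
              nlinarith
          _ = 49 * D * (α ^ (2 / (D : ℝ) - 2)) := by rw [← hrα2]; ring
          _ ≤ 200 * D * max 1 (α ^ (2 / (D : ℝ) - 2)) := by
              have h1 : (49:ℝ) * D * (α ^ (2 / (D : ℝ) - 2)) ≤ 200 * D * (α ^ (2 / (D : ℝ) - 2)) := by
                have h2 : (0:ℝ) ≤ α ^ (2 / (D : ℝ) - 2) := by positivity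
                nlinarith [hD1]
              exact h1.trans (mul_le_mul_of_nonneg_left (le_max_right _ _) (by positivity))
      · intro z hz
        obtain ⟨i, hi⟩ := Set.mem_iUnion.mp (hsub hz)
        obtain ⟨p, hp⟩ := Set.mem_iUnion.mp (hgs (c i) hi)
        refine Set.mem_iUnion.mpr ⟨e (i, p), ?_⟩
        simpa using hp

end QHE
end
end
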